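/- Let f : ℝ^d → ℝ be convex and (L₀,L₁)-smooth. Then for any x, y ∈ ℝ^d: ‖∇f(y) - ∇f(x)‖² / (2(L₀ + L₁‖∇f(y)‖) + L₁‖∇f(y) - ∇f(x)‖) ≤ f(y) - f(x) - ⟨∇f(x), y - x⟩. -/

import Mathlib

/-!
Put `G = ‖∇f y - ∇f x‖`, `A = L₀ + L₁‖∇f y‖`, `D = 2A + L₁G` and step from `y` by
`w = -(2/D) (∇f y - ∇f x)`. Along the segment `y + s w`, Grönwall's inequality applied to the
bound `‖∇²f‖ ≤ L₀ + L₁‖∇f‖` gives `‖∇f (y + s w) - ∇f y‖ ≤ (A/L₁)(exp (L₁ s ‖w‖) - 1)`, and by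
convexity of `exp` together with `log (1 + ρ) ≥ 2ρ/(2 + ρ)` this is at most `s G` for the chosen
length `‖w‖ = 2G/D`. This yields `f (y + w) ≤ f y + ⟪∇f y, w⟫ + G‖w‖/2`; combined with the
supporting hyperplane `f (y + w) ≥ f x + ⟪∇f x, y + w - x⟫` this is exactly the claim.
-/

open RealInnerProductSpace Set

section GronwallBound

open Real

theorem gronwallBound_zero_le_mul {K ε s : ℝ} (hK : 0 ≤ K) (hε : 0 ≤ ε) (hs : s ∈ Icc (0 : ℝ) 1) :
    gronwallBound 0 K ε s ≤ s * gronwallBound 0 K ε 1 := by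
  obtain ⟨hs0, hs1⟩ := hs
  rcases hK.eq_or_lt with rfl | hK
  · simp [gronwallBound_K0, mul_comm]
  rw [gronwallBound_of_K_ne_0 hK.ne']
  have hexp : exp (K * s) ≤ (1 - s) + s * exp K := by
    simpa [smul_eq_mul, mul_comm] using
      convexOn_exp.2 (mem_univ 0) (mem_univ K) (sub_nonneg.2 hs1) hs0 (by ring)
  simp only [zero_mul, zero_add, mul_one]
  nlinarith [div_nonneg hε hK.le, mul_le_mul_of_nonneg_left hexp (div_nonneg hε hK.le)]

theorem gronwallBound_zero_one_le {A L G : ℝ} (hA : 0 < A) (hL : 0 ≤ L) (hG : 0 ≤ G) :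
    gronwallBound 0 (L * (2 * G / (2 * A + L * G))) (A * (2 * G / (2 * A + L * G))) 1 ≤ G := by
  set t := 2 * G / (2 * A + L * G) with ht
  have hD : 0 < 2 * A + L * G := by positivity
  by_cases hK : L * t = 0
  · simp only [hK, gronwallBound_K0, zero_add, mul_one]
    rw [ht, ← mul_div_assoc, div_le_iff₀ hD]
    nlinarith [mul_nonneg hL hG]
  have hL : 0 < L := hL.lt_of_ne (by rintro rfl; simp at hK)
  have ht0 : t ≠ 0 := right_ne_zero_of_mul hK
  have hexp : exp (L * t) ≤ 1 + L * G / A := by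
    have hlog := Real.le_log_one_add_of_nonneg (div_nonneg (mul_nonneg hL.le hG) hA.le)
    have heq : 2 * (L * G / A) / (L * G / A + 2) = L * t := by
      rw [ht]; field_simp; ring
    rw [heq] at hlog
    calc exp (L * t) ≤ exp (log (1 + L * G / A)) := exp_le_exp.2 hlog
      _ = 1 + L * G / A := exp_log (by positivity)
  simp only [gronwallBound_of_K_ne_0 hK, zero_mul, zero_add, mul_one, mul_div_mul_right _ _ ht0]
  calc A / L * (exp (L * t) - 1) ≤ A / L * (L * G / A) := by gcongr; linarith
    _ = G := by field_simp

end GronwallBound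

theorem norm_sub_le_gronwallBound_of_norm_fderiv_le {E F : Type*} [NormedAddCommGroup E]
    [NormedSpace ℝ E] [NormedAddCommGroup F] [NormedSpace ℝ F] {g : E → F} {L0 L1 : ℝ}
    (hL1 : 0 ≤ L1) (hg : Differentiable ℝ g) (hbound : ∀ z, ‖fderiv ℝ g z‖ ≤ L0 + L1 * ‖g z‖)
    (y w : E) {s : ℝ} (hs : 0 ≤ s) :
    ‖g (y + s • w) - g y‖ ≤ gronwallBound 0 (L1 * ‖w‖) ((L0 + L1 * ‖g y‖) * ‖w‖) s := by
  have hline : ∀ r : ℝ, HasDerivAt (fun r : ℝ => y + r • w) w r := fun r => by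
    simpa using ((hasDerivAt_id r).smul_const w).const_add y
  have hderiv : ∀ r : ℝ, HasDerivAt (fun r => g (y + r • w) - g y) (fderiv ℝ g (y + r • w) w) r :=
    fun r => ((hg _).hasFDerivAt.comp_hasDerivAt r (hline r)).sub_const (g y)
  have hdg : ∀ r : ℝ, ‖fderiv ℝ g (y + r • w) w‖
      ≤ L1 * ‖w‖ * ‖g (y + r • w) - g y‖ + (L0 + L1 * ‖g y‖) * ‖w‖ := fun r => by
    have htri : ‖g (y + r • w)‖ ≤ ‖g y‖ + ‖g (y + r • w) - g y‖ := norm_le_insert' _ _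
    calc ‖fderiv ℝ g (y + r • w) w‖ ≤ ‖fderiv ℝ g (y + r • w)‖ * ‖w‖ := (fderiv ℝ g _).le_opNorm w
      _ ≤ (L0 + L1 * ‖g (y + r • w)‖) * ‖w‖ := by gcongr; exact hbound _
      _ ≤ (L0 + L1 * (‖g y‖ + ‖g (y + r • w) - g y‖)) * ‖w‖ := by gcongr
      _ = _ := by ring
  simpa using norm_le_gronwallBound_of_norm_deriv_right_le
    (fun r _ => (hderiv r).continuousAt.continuousWithinAt) (fun r _ => (hderiv r).hasDerivWithinAt)
    (by simp) (fun r _ => hdg r) s ⟨hs, le_rfl⟩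

section Gradient

variable {E : Type*} [NormedAddCommGroup E] [InnerProductSpace ℝ E] [CompleteSpace E] {f : E → ℝ}

theorem ContDiff.gradient {m n : WithTop ℕ∞} (hf : ContDiff ℝ n f) (hmn : m + 1 ≤ n) :
    ContDiff ℝ m (gradient f) :=
  (InnerProductSpace.toDual ℝ E).symm.contDiff.comp (hf.fderiv_right hmn)

theorem Differentiable.hasDerivAt_comp_add_smul (hf : Differentiable ℝ f) (y w : E) (s : ℝ) :
    HasDerivAt (fun s : ℝ => f (y + s • w)) ⟪gradient f (y + s • w), w⟫ s := by
  rw [inner_gradient_left]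
  exact (hf _).hasFDerivAt.comp_hasDerivAt s
    (by simpa using ((hasDerivAt_id s).smul_const w).const_add y)

theorem ConvexOn.inner_gradient_sub_le (hconv : ConvexOn ℝ univ f) (hf : Differentiable ℝ f)
    (x y : E) : ⟪gradient f x, y - x⟫ ≤ f y - f x := by
  have hline : ConvexOn ℝ univ (fun s : ℝ => f (x + s • (y - x))) := by
    simpa [Function.comp_def, AffineMap.lineMap_apply, add_comm] using
      hconv.comp_affineMap (AffineMap.lineMap x y : ℝ →ᵃ[ℝ] E)
  have hderiv := hf.hasDerivAt_comp_add_smul x (y - x) 0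
  rw [zero_smul, add_zero] at hderiv
  have hslope := hline.le_slope_of_hasDerivAt (mem_univ 0) (mem_univ 1) zero_lt_one hderiv
  simpa only [slope_def_field, one_smul, zero_smul, add_zero, add_sub_cancel, sub_zero, div_one]
    using hslope

theorem sub_sub_inner_gradient_le_of_norm_gradient_sub_le (hf : Differentiable ℝ f) {y w : E}
    {M : ℝ} (hbound : ∀ s ∈ Icc (0 : ℝ) 1, ‖gradient f (y + s • w) - gradient f y‖ ≤ s * M) :
    f (y + w) - f y - ⟪gradient f y, w⟫ ≤ M * ‖w‖ / 2 := by
  have hderiv : ∀ s, HasDerivAt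
      (fun s : ℝ => f (y + s • w) - s * ⟪gradient f y, w⟫ - s ^ 2 * (M * ‖w‖ / 2))
      (⟪gradient f (y + s • w) - gradient f y, w⟫ - s * M * ‖w‖) s := fun s => by
    refine (((hf.hasDerivAt_comp_add_smul y w s).sub ((hasDerivAt_id' s).mul_const _)).sub
      ((hasDerivAt_pow 2 s).mul_const (M * ‖w‖ / 2))).congr_deriv ?_
    rw [inner_sub_left]; push_cast; ring
  have hanti := antitoneOn_of_hasDerivWithinAt_nonpos (convex_Icc 0 1)
    (fun s _ => (hderiv s).continuousAt.continuousWithinAt)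
    (fun s _ => (hderiv s).hasDerivWithinAt) fun s hs => by
      rw [interior_Icc] at hs
      calc ⟪gradient f (y + s • w) - gradient f y, w⟫ - s * M * ‖w‖
          ≤ ‖gradient f (y + s • w) - gradient f y‖ * ‖w‖ - s * M * ‖w‖ := by
            gcongr; exact real_inner_le_norm _ _
        _ ≤ 0 := by
            rw [sub_nonpos]; gcongr; exact hbound s (Ioo_subset_Icc_self hs)
  have h01 := hanti (left_mem_Icc.2 zero_le_one) (right_mem_Icc.2 zero_le_one) zero_le_one
  simp only [one_smul, zero_smul, add_zero, one_mul, zero_mul, one_pow, sub_zero,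
    zero_pow two_ne_zero] at h01
  linarith

theorem ConvexOn.neg_inner_sub_le_of_norm_gradient_sub_le (hconv : ConvexOn ℝ univ f)
    (hf : Differentiable ℝ f) (x : E) {y w : E} {M : ℝ}
    (hbound : ∀ s ∈ Icc (0 : ℝ) 1, ‖gradient f (y + s • w) - gradient f y‖ ≤ s * M) :
    -⟪gradient f y - gradient f x, w⟫ - M * ‖w‖ / 2 ≤ f y - f x - ⟪gradient f x, y - x⟫ := by
  have hdescent := sub_sub_inner_gradient_le_of_norm_gradient_sub_le hf hbound
  have hsupport := hconv.inner_gradient_sub_le hf x (y + w)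
  rw [show y + w - x = (y - x) + w by abel, inner_add_right] at hsupport
  rw [inner_sub_left]
  linarith

end Gradient

/-- For convex (L₀,L₁)-smooth f:
    ‖∇f(y) - ∇f(x)‖² / (2(L₀ + L₁‖∇f(y)‖) + L₁‖∇f(y) - ∇f(x)‖)
      ≤ f(y) - f(x) - ⟨∇f(x), y - x⟩. -/
theorem stmt_9 (d : ℕ) (L0 L1 : ℝ) (hL0 : 0 < L0) (hL1 : 0 ≤ L1)
    (f : EuclideanSpace ℝ (Fin d) → ℝ) (hf : ContDiff ℝ 2 f)
    (hconv : ConvexOn ℝ Set.univ f)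
    (hsmooth : ∀ x : EuclideanSpace ℝ (Fin d),
      ‖fderiv ℝ (gradient f) x‖ ≤ L0 + L1 * ‖gradient f x‖) :
    ∀ x y : EuclideanSpace ℝ (Fin d),
      ‖gradient f y - gradient f x‖ ^ 2 /
          (2 * (L0 + L1 * ‖gradient f y‖) + L1 * ‖gradient f y - gradient f x‖) ≤
        f y - f x - ⟪gradient f x, y - x⟫ := by
  intro x y
  set G := ‖gradient f y - gradient f x‖
  set A := L0 + L1 * ‖gradient f y‖
  have hA : 0 < A := by positivity
  set w := -(2 / (2 * A + L1 * G)) • (gradient f y - gradient f x)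
  have hw : ‖w‖ = 2 * G / (2 * A + L1 * G) := by
    rw [norm_smul, norm_neg, Real.norm_of_nonneg (by positivity), div_mul_eq_mul_div]
  have hbound : ∀ s ∈ Icc (0 : ℝ) 1, ‖gradient f (y + s • w) - gradient f y‖ ≤ s * G := by
    intro s hs
    calc ‖gradient f (y + s • w) - gradient f y‖
        ≤ gronwallBound 0 (L1 * ‖w‖) (A * ‖w‖) s :=
          norm_sub_le_gronwallBound_of_norm_fderiv_le hL1
            ((hf.gradient (m := 1) (by norm_num)).differentiable one_ne_zero) hsmooth y w hs.1
      _ ≤ s * gronwallBound 0 (L1 * ‖w‖) (A * ‖w‖) 1 :=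
          gronwallBound_zero_le_mul (by positivity) (by positivity) hs
      _ ≤ s * G := by
          rw [hw]
          exact mul_le_mul_of_nonneg_left (gronwallBound_zero_one_le hA hL1 (norm_nonneg _)) hs.1
  have hkey := hconv.neg_inner_sub_le_of_norm_gradient_sub_le (hf.differentiable two_ne_zero) x
    hbound
  rw [real_inner_smul_right, real_inner_self_eq_norm_sq, hw] at hkey
  calc G ^ 2 / (2 * A + L1 * G)
      = -(-(2 / (2 * A + L1 * G)) * G ^ 2) - G * (2 * G / (2 * A + L1 * G)) / 2 := by
        field_simp; ring
    _ ≤ _ := hkey
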